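/- arXiv:2203.01736 — 2 statements merged into one kernel-verified Lean document; each statement's English description precedes it below -/
import Mathlib

section
/- For all coprime integers r > a ≥ 1 there exists exactly one nonempty finite sequence (b₁, …, b_l) of integers with bᵢ ≥ 2 for all i such that HJ(b₁, …, b_l) = r/a. -/
def HJ : List ℤ → ℚ
  | [] => 0
  | [b] => (b : ℚ)
  | b :: bs => (b : ℚ) - 1 / HJ bs

lemma HJ_cons (b : ℤ) (bs : List ℤ) (h : bs ≠ []) :
    HJ (b :: bs) = (b : ℚ) - 1 / HJ bs := by
  cases bs with
  | nil => exact absurd rfl h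
  | cons c cs => rfl

lemma HJ_gt_one : ∀ l : List ℤ, l ≠ [] → (∀ b ∈ l, (2:ℤ) ≤ b) → 1 < HJ l := by
  intro l
  induction l with
  | nil => intro h; exact absurd rfl h
  | cons b bs ih =>
    intro _ hb
    have hb2 : (2:ℚ) ≤ (b:ℚ) := by exact_mod_cast hb b (by simp)
    cases bs with
    | nil => simp only [HJ]; linarith
    | cons c cs =>
      have htail : 1 < HJ (c :: cs) :=
        ih (by simp) (fun x hx => hb x (List.mem_cons_of_mem _ hx))
      have hpos : 0 < HJ (c :: cs) := lt_trans one_pos htail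
      have h1 : 1 / HJ (c :: cs) < 1 := by
        rw [div_lt_one hpos]; exact htail
      have h0 : 0 < 1 / HJ (c :: cs) := by positivity
      rw [HJ_cons b (c::cs) (by simp)]
      linarith

lemma hj_key : ∀ n : ℕ, ∀ r a : ℤ, a.toNat = n → 1 ≤ a → a < r → Int.gcd r a = 1 →
    ∃! l : List ℤ, (l ≠ [] ∧ ∀ b ∈ l, (2:ℤ) ≤ b) ∧ HJ l = (r:ℚ)/(a:ℚ) := by
  intro n
  induction n using Nat.strong_induction_on with
  | _ n ih =>
  intro r a hn ha har hcop
  have ha0 : (0:ℚ) < (a:ℚ) := by exact_mod_cast lt_of_lt_of_le one_pos ha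
  rcases eq_or_lt_of_le ha with h1 | h2
  · -- a = 1
    have ha1 : a = 1 := h1.symm
    subst ha1
    have hr2 : (2:ℤ) ≤ r := har
    refine ⟨[r], ⟨⟨by simp, by simp [hr2]⟩, by simp [HJ]⟩, ?_⟩
    rintro l ⟨⟨hne, h2l⟩, hHJ⟩
    cases l with
    | nil => exact absurd rfl hne
    | cons b bs =>
      cases bs with
      | nil =>
        simp only [HJ] at hHJ
        have : (b:ℚ) = (r:ℚ) := by rw [hHJ]; simp
        have : b = r := by exact_mod_cast this
        simp [this]
      | cons c cs =>
        exfalso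
        have htail : 1 < HJ (c :: cs) :=
          HJ_gt_one _ (by simp) (fun x hx => h2l x (List.mem_cons_of_mem _ hx))
        have hpos : 0 < HJ (c :: cs) := lt_trans one_pos htail
        have hlt : 1 / HJ (c :: cs) < 1 := by rw [div_lt_one hpos]; exact htail
        have hgt : 0 < 1 / HJ (c :: cs) := by positivity
        rw [HJ_cons b _ (by simp)] at hHJ
        have heq : (b:ℚ) - 1 / HJ (c::cs) = (r:ℚ) := by rw [hHJ]; simp
        have h1 : (r:ℚ) < b := by linarith
        have h2 : (b:ℚ) < r + 1 := by linarith
        have h1' : r < b := by exact_mod_cast h1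
        have h2' : b < r + 1 := by exact_mod_cast h2
        omega
  · -- 2 ≤ a
    set b : ℤ := r / a + 1 with hbdef
    set a' : ℤ := a * b - r with ha'def
    have haR : r % a ≠ 0 := by
      intro h
      have hdvd : a ∣ r := Int.dvd_of_emod_eq_zero h
      have hc := Int.isCoprime_iff_gcd_eq_one.mpr hcop
      have hu : IsUnit a := hc.isUnit_of_dvd' hdvd dvd_rfl
      rcases Int.isUnit_iff.mp hu with h | h <;> omega
    have hmod : r % a + a * (r / a) = r := Int.emod_add_mul_ediv r a
    have hmodpos : 0 < r % a := lt_of_le_of_ne (Int.emod_nonneg r (by omega)) (Ne.symm haR)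
    have hmodlt : r % a < a := Int.emod_lt_of_pos r (by omega)
    have ha'1 : 1 ≤ a' := by simp only [ha'def, hbdef]; ring_nf; omega
    have ha'lt : a' < a := by simp only [ha'def, hbdef]; ring_nf; omega
    have hcop' : Int.gcd a a' = 1 := by
      rw [Int.gcd_comm] at hcop
      have h := (Int.isCoprime_iff_gcd_eq_one.mpr hcop).neg_right
      have h2 : IsCoprime a (-r + a * b) := h.add_mul_left_right b
      rw [← Int.isCoprime_iff_gcd_eq_one]
      have : a' = -r + a * b := by ring
      rw [this]; exact h2
    have hlt : a'.toNat < n := by omega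
    obtain ⟨bs, ⟨⟨hbsne, hbs2⟩, hbsHJ⟩, hbsuniq⟩ :=
      ih a'.toNat hlt a a' rfl ha'1 ha'lt hcop'
    have ha'0 : (0:ℚ) < (a':ℚ) := by exact_mod_cast lt_of_lt_of_le one_pos ha'1
    have hb2 : (2:ℤ) ≤ b := by
      have : 1 ≤ r / a := by
        rw [Int.le_ediv_iff_mul_le (by omega)]; omega
      omega
    have habr : (a':ℚ) = a * b - r := by push_cast [ha'def]; ring
    have hHtail : 1 < HJ bs := HJ_gt_one bs hbsne hbs2
    have hHJl : HJ (b :: bs) = (r:ℚ)/(a:ℚ) := by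
      rw [HJ_cons b bs hbsne, hbsHJ]
      field_simp
      linarith
    refine ⟨b :: bs, ⟨⟨by simp, ?_⟩, hHJl⟩, ?_⟩
    · intro x hx
      rcases List.mem_cons.mp hx with h | h
      · omega
      · exact hbs2 x h
    · rintro l ⟨⟨hne, h2l⟩, hHJ⟩
      cases l with
      | nil => exact absurd rfl hne
      | cons b' bs' =>
        cases bs' with
        | nil =>
          exfalso
          simp only [HJ] at hHJ
          have : (b':ℚ) * a = r := by field_simp at hHJ; linarith
          have hdvd : b' * a = r := by exact_mod_cast this
          have : a ∣ r := Dvd.intro_left b' hdvd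
          exact haR (Int.emod_eq_zero_of_dvd this)
        | cons c cs =>
          have hbs'ne : (c :: cs : List ℤ) ≠ [] := by simp
          have htail : 1 < HJ (c :: cs) :=
            HJ_gt_one _ hbs'ne (fun x hx => h2l x (List.mem_cons_of_mem _ hx))
          have hpos : 0 < HJ (c :: cs) := lt_trans one_pos htail
          have hlt1 : 1 / HJ (c :: cs) < 1 := by rw [div_lt_one hpos]; exact htail
          have hgt0 : 0 < 1 / HJ (c :: cs) := by positivity
          rw [HJ_cons b' _ hbs'ne] at hHJ
          -- bounds give b' = b
          have hub : (r:ℚ) < a * b' := by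
            rw [eq_div_iff (ne_of_gt ha0)] at hHJ
            nlinarith
          have hlb : (a:ℚ) * (b' - 1) < r := by
            rw [eq_div_iff (ne_of_gt ha0)] at hHJ
            nlinarith
          have hub' : r < a * b' := by exact_mod_cast hub
          have hlb' : a * (b' - 1) < r := by exact_mod_cast hlb
          have hab : a * b = a * (r / a) + a := by rw [hbdef]; ring
          have hab1 : a * (b - 1) = a * (r / a) := by rw [hbdef]; ring
          have hubB : r < a * b := by omega
          have hlbB : a * (b - 1) < r := by omega
          have hbb : b' = b := by
            have h1 : a * (b - 1) < a * b' := lt_trans hlbB hub'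
            have h2 : a * (b' - 1) < a * b := lt_trans hlb' hubB
            have h1' : b - 1 < b' := lt_of_mul_lt_mul_left h1 (by omega)
            have h2' : b' - 1 < b := lt_of_mul_lt_mul_left h2 (by omega)
            omega
          subst hbb
          have hHtail' : HJ (c :: cs) = (a:ℚ)/(a':ℚ) := by
            have hHne : HJ (c :: cs) ≠ 0 := ne_of_gt hpos
            have h := hHJ
            field_simp at h
            rw [eq_div_iff (ne_of_gt ha'0), habr]
            linear_combination h
          have := hbsuniq (c :: cs) ⟨⟨hbs'ne,
            fun x hx => h2l x (List.mem_cons_of_mem _ hx)⟩, hHtail'⟩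
          rw [this]

/-- For all coprime integers `r > a ≥ 1` there exists exactly one nonempty finite sequence
`(b₁, …, b_l)` of integers with all `bᵢ ≥ 2` whose Hirzebruch–Jung continued fraction value
is `r / a`. -/
theorem hj_exists_unique (r a : ℤ) (ha : 1 ≤ a) (har : a < r) (hcop : Int.gcd r a = 1) :
    ∃! l : List ℤ, (l ≠ [] ∧ ∀ b ∈ l, (2 : ℤ) ≤ b) ∧ HJ l = (r : ℚ) / (a : ℚ) := by
  exact hj_key a.toNat r a rfl ha har hcop
end

section
/- Let k ≥ 1 be an integer and define Ψ : S¹ × (ℂ² ∖ {0}) → ℂ² × S³ by Ψ(s, (z₁, z₂)) = ((s·z₁ᵏ, s·z₂ᵏ), (z₁/‖z‖, z₂/‖z‖)), where ‖z‖ = √(|z₁|² + |z₂|²). Then: (i) Ψ is injective; (ii) the image of Ψ is exactly S(−k) ∖ ({0} × S³), where S(−k) = {((z₁, z₂), (u₁, u₂)) ∈ ℂ² × S³ : z₁u₂ᵏ = z₂u₁ᵏ}; (iii) for every t ∈ S¹, Ψ(tᵏs, (t⁻¹z₁, t⁻¹z₂)) = α_k(t, Ψ(s, (z₁, z₂))),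 where α_k(t, ((z₁, z₂), (u₁, u₂))) = ((z₁, z₂), (t⁻¹u₁, t⁻¹u₂)). -/
/-- The unit 3-sphere `S³ = {(u₁, u₂) ∈ ℂ² : |u₁|² + |u₂|² = 1}`. -/
def Sphere3 : Set (ℂ × ℂ) := {u | ‖u.1‖ ^ 2 + ‖u.2‖ ^ 2 = 1}

/-- The local model `S(−k) = {((z₁, z₂), (u₁, u₂)) ∈ ℂ² × S³ : z₁u₂ᵏ = z₂u₁ᵏ}`. -/
def Sneg (k : ℕ) : Set ((ℂ × ℂ) × ℂ × ℂ) :=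
  {p | p.2 ∈ Sphere3 ∧ p.1.1 * p.2.2 ^ k = p.1.2 * p.2.1 ^ k}

/-- The `S¹`-equivariant embedding `Ψ : S¹ × (ℂ² ∖ {0}) → ℂ² × S³`,
`Ψ(s, (z₁, z₂)) = ((s·z₁ᵏ, s·z₂ᵏ), (z₁/‖z‖, z₂/‖z‖))`, extended by the same formula. -/
noncomputable def PsiMap (k : ℕ) : ℂ × ℂ × ℂ → (ℂ × ℂ) × ℂ × ℂ :=
  fun p =>
    ((p.1 * p.2.1 ^ k, p.1 * p.2.2 ^ k),
      (p.2.1 / ((Real.sqrt (‖p.2.1‖ ^ 2 + ‖p.2.2‖ ^ 2) : ℝ) : ℂ),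
        p.2.2 / ((Real.sqrt (‖p.2.1‖ ^ 2 + ‖p.2.2‖ ^ 2) : ℝ) : ℂ)))

/-! `Ψ(s, z)` remembers `z / ‖z‖` and, since `|s zᵢᵏ| = |zᵢ|ᵏ`, also `‖z‖`; hence `z`, and then `s`.
For the image, `Ψ(s, r • u) = ((s rᵏ) • (u₁ᵏ, u₂ᵏ), u)` for `r > 0` and `u ∈ S³`. As `u ≠ 0`, the
equation of `S(−k)` says exactly that `w = c • (u₁ᵏ, u₂ᵏ)` for some `c`, and every `c ≠ 0` is
`s rᵏ` with `|s| = 1`, `r > 0`. -/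

noncomputable def l2Norm (z : ℂ × ℂ) : ℝ := Real.sqrt (‖z.1‖ ^ 2 + ‖z.2‖ ^ 2)

lemma psiMap_apply (k : ℕ) (s : ℂ) (z : ℂ × ℂ) :
    PsiMap k (s, z) = ((s * z.1 ^ k, s * z.2 ^ k), (z.1 / l2Norm z, z.2 / l2Norm z)) :=
  rfl

lemma Prod.fst_ne_zero_or_snd_ne_zero {α β : Type*} [Zero α] [Zero β] {z : α × β}
    (hz : z ≠ 0) : z.1 ≠ 0 ∨ z.2 ≠ 0 := by
  by_contra! h
  exact hz (Prod.ext h.1 h.2)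

lemma l2Norm_pos {z : ℂ × ℂ} (hz : z ≠ 0) : 0 < l2Norm z := by
  refine Real.sqrt_pos.2 ?_
  rcases Prod.fst_ne_zero_or_snd_ne_zero hz with h | h <;> positivity

lemma l2Norm_smul (c : ℂ) (z : ℂ × ℂ) : l2Norm (c • z) = ‖c‖ * l2Norm z := by
  simp only [l2Norm, Prod.smul_fst, Prod.smul_snd, smul_eq_mul, norm_mul, mul_pow, ← mul_add]
  rw [Real.sqrt_mul (by positivity), Real.sqrt_sq (norm_nonneg c)]

lemma mem_sphere3_iff {u : ℂ × ℂ} : u ∈ Sphere3 ↔ l2Norm u = 1 := by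
  rw [l2Norm, Real.sqrt_eq_one]
  rfl

lemma ne_zero_of_mem_sphere3 {u : ℂ × ℂ} (hu : u ∈ Sphere3) : u ≠ 0 := by
  rintro rfl
  simp [Sphere3] at hu

lemma div_l2Norm_mem_sphere3 {z : ℂ × ℂ} (hz : z ≠ 0) :
    (z.1 / l2Norm z, z.2 / l2Norm z) ∈ Sphere3 := by
  have hN := l2Norm_pos hz
  have hu : (z.1 / l2Norm z, z.2 / l2Norm z) = (l2Norm z : ℂ)⁻¹ • z := by
    ext <;> simp [div_eq_inv_mul]
  rw [mem_sphere3_iff, hu, l2Norm_smul, norm_inv, Complex.norm_real, Real.norm_of_nonneg hN.le,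
    inv_mul_cancel₀ hN.ne']

lemma psiMap_ofReal_smul (k : ℕ) (s : ℂ) {r : ℝ} (hr : 0 < r) {u : ℂ × ℂ} (hu : u ∈ Sphere3) :
    PsiMap k (s, (r : ℂ) • u) = ((s * r ^ k) • (u.1 ^ k, u.2 ^ k), u) := by
  have hN : l2Norm ((r : ℂ) • u) = r := by
    rw [l2Norm_smul, mem_sphere3_iff.1 hu, Complex.norm_real, Real.norm_of_nonneg hr.le, mul_one]
  have hr0 : (r : ℂ) ≠ 0 := Complex.ofReal_ne_zero.2 hr.ne'
  simp only [psiMap_apply, hN, Prod.smul_fst, Prod.smul_snd, Prod.smul_mk, smul_eq_mul, mul_pow]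
  ext <;> simp only [mul_div_cancel_left₀ _ hr0] <;> ring

lemma psiMap_image_subset {k : ℕ} (hk : k ≠ 0) :
    PsiMap k '' {p : ℂ × ℂ × ℂ | ‖p.1‖ = 1 ∧ p.2 ≠ 0} ⊆
      Sneg k \ (({0} : Set (ℂ × ℂ)) ×ˢ Sphere3) := by
  rintro _ ⟨⟨s, z⟩, ⟨hs, hz⟩, rfl⟩
  refine ⟨⟨div_l2Norm_mem_sphere3 hz, ?_⟩, fun h => ?_⟩
  · simp only [psiMap_apply, div_pow]
    ring
  · have hs0 : s ≠ 0 := norm_ne_zero_iff.1 (by rw [hs]; exact one_ne_zero)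
    have hw : s * z.1 ^ k = 0 ∧ s * z.2 ^ k = 0 := Prod.mk_eq_zero.1 h.1
    simp only [mul_eq_zero, hs0, pow_eq_zero_iff hk, false_or] at hw
    exact hz (Prod.ext hw.1 hw.2)

lemma exists_eq_smul_pow_of_mul_pow_eq {k : ℕ} {w u : ℂ × ℂ} (hu : u ≠ 0)
    (h : w.1 * u.2 ^ k = w.2 * u.1 ^ k) : ∃ c : ℂ, w = c • (u.1 ^ k, u.2 ^ k) := by
  rcases Prod.fst_ne_zero_or_snd_ne_zero hu with hu₁ | hu₂
  · refine ⟨w.1 / u.1 ^ k, Prod.ext ?_ ?_⟩ <;>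
      simp only [Prod.smul_fst, Prod.smul_snd, smul_eq_mul] <;> field_simp [pow_ne_zero k hu₁]
    exact h.symm
  · refine ⟨w.2 / u.2 ^ k, Prod.ext ?_ ?_⟩ <;>
      simp only [Prod.smul_fst, Prod.smul_snd, smul_eq_mul] <;> field_simp [pow_ne_zero k hu₂]
    exact h

lemma exists_norm_eq_one_mul_ofReal_pow_eq {k : ℕ} (hk : k ≠ 0) {c : ℂ} (hc : c ≠ 0) :
    ∃ s : ℂ, ∃ r : ℝ, ‖s‖ = 1 ∧ 0 < r ∧ s * (r : ℂ) ^ k = c := by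
  have hc' : (‖c‖ : ℂ) ≠ 0 := Complex.ofReal_ne_zero.2 (norm_ne_zero_iff.2 hc)
  refine ⟨c / ‖c‖, ‖c‖ ^ (k⁻¹ : ℝ), by simp [hc], by positivity, ?_⟩
  rw [← Complex.ofReal_pow, Real.rpow_inv_natCast_pow (norm_nonneg c) hk, div_mul_cancel₀ c hc']

lemma subset_psiMap_image {k : ℕ} (hk : k ≠ 0) :
    Sneg k \ (({0} : Set (ℂ × ℂ)) ×ˢ Sphere3) ⊆
      PsiMap k '' {p : ℂ × ℂ × ℂ | ‖p.1‖ = 1 ∧ p.2 ≠ 0} := by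
  rintro ⟨w, u⟩ ⟨⟨hu : u ∈ Sphere3, hwu : w.1 * u.2 ^ k = w.2 * u.1 ^ k⟩, hw⟩
  have hw0 : w ≠ 0 := fun h => hw ⟨h, hu⟩
  obtain ⟨c, rfl⟩ := exists_eq_smul_pow_of_mul_pow_eq (ne_zero_of_mem_sphere3 hu) hwu
  obtain ⟨s, r, hs, hr, rfl⟩ := exists_norm_eq_one_mul_ofReal_pow_eq hk (left_ne_zero_of_smul hw0)
  have hru : (r : ℂ) • u ≠ 0 :=
    smul_ne_zero (Complex.ofReal_ne_zero.2 hr.ne') (ne_zero_of_mem_sphere3 hu)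
  exact ⟨(s, (r : ℂ) • u), ⟨hs, hru⟩, psiMap_ofReal_smul k s hr hu⟩

lemma norm_eq_of_mul_pow_eq {k : ℕ} (hk : k ≠ 0) {s s' a b : ℂ} (hs : ‖s‖ = 1) (hs' : ‖s'‖ = 1)
    (h : s * a ^ k = s' * b ^ k) : ‖a‖ = ‖b‖ := by
  have h' := congrArg norm h
  simp only [norm_mul, norm_pow, hs, hs', one_mul] at h'
  exact (pow_left_inj₀ (norm_nonneg _) (norm_nonneg _) hk).1 h'

lemma psiMap_injOn {k : ℕ} (hk : k ≠ 0) :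
    Set.InjOn (PsiMap k) {p : ℂ × ℂ × ℂ | ‖p.1‖ = 1 ∧ p.2 ≠ 0} := by
  rintro ⟨s, z⟩ ⟨hs, hz⟩ ⟨s', w⟩ ⟨hs', hw⟩ h
  simp only [psiMap_apply, Prod.mk.injEq] at h
  obtain ⟨⟨h₁, h₂⟩, hu₁, hu₂⟩ := h
  have hN : l2Norm z = l2Norm w := by
    simp only [l2Norm, norm_eq_of_mul_pow_eq hk hs hs' h₁, norm_eq_of_mul_pow_eq hk hs hs' h₂]
  have hN0 : (l2Norm w : ℂ) ≠ 0 := Complex.ofReal_ne_zero.2 (l2Norm_pos hw).ne'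
  rw [hN, div_left_inj' hN0] at hu₁ hu₂
  obtain rfl : z = w := Prod.ext hu₁ hu₂
  have hss : s = s' := by
    rcases Prod.fst_ne_zero_or_snd_ne_zero hz with hz₁ | hz₂
    · exact mul_right_cancel₀ (pow_ne_zero k hz₁) h₁
    · exact mul_right_cancel₀ (pow_ne_zero k hz₂) h₂
  rw [hss]

lemma psiMap_equivariant (k : ℕ) {t : ℂ} (ht : ‖t‖ = 1) (s : ℂ) (z : ℂ × ℂ) :
    PsiMap k (t ^ k * s, t⁻¹ • z) = ((PsiMap k (s, z)).1, t⁻¹ • (PsiMap k (s, z)).2) := by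
  have ht0 : t ≠ 0 := norm_ne_zero_iff.1 (by rw [ht]; exact one_ne_zero)
  have hN : l2Norm (t⁻¹ • z) = l2Norm z := by rw [l2Norm_smul, norm_inv, ht, inv_one, one_mul]
  simp only [psiMap_apply, hN, Prod.smul_fst, Prod.smul_snd, Prod.smul_mk, smul_eq_mul, mul_pow,
    inv_pow]
  ext <;> field_simp

/-- `Ψ` is injective on `S¹ × (ℂ² ∖ {0})`, its image is exactly `S(−k) ∖ ({0} × S³)`, and it
intertwines `t·(s, z₁, z₂) = (tᵏs, t⁻¹z₁, t⁻¹z₂)` with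
`α_k(t, ((z₁, z₂), (u₁, u₂))) = ((z₁, z₂), (t⁻¹u₁, t⁻¹u₂))`. -/
theorem psiMap_injective_image_equivariant (k : ℕ) (hk : 1 ≤ k) :
    Set.InjOn (PsiMap k) {p : ℂ × ℂ × ℂ | ‖p.1‖ = 1 ∧ p.2 ≠ 0} ∧
    PsiMap k '' {p : ℂ × ℂ × ℂ | ‖p.1‖ = 1 ∧ p.2 ≠ 0} =
      Sneg k \ (({0} : Set (ℂ × ℂ)) ×ˢ Sphere3) ∧
    (∀ t s z₁ z₂ : ℂ, ‖t‖ = 1 → ‖s‖ = 1 → (z₁, z₂) ≠ (0 : ℂ × ℂ) →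
      PsiMap k (t ^ k * s, (t⁻¹ * z₁, t⁻¹ * z₂)) =
        ((PsiMap k (s, (z₁, z₂))).1,
          (t⁻¹ * (PsiMap k (s, (z₁, z₂))).2.1, t⁻¹ * (PsiMap k (s, (z₁, z₂))).2.2))) := by
  have hk0 : k ≠ 0 := Nat.one_le_iff_ne_zero.1 hk
  exact ⟨psiMap_injOn hk0, (psiMap_image_subset hk0).antisymm (subset_psiMap_image hk0),
    fun t s z₁ z₂ ht _ _ => psiMap_equivariant k ht s (z₁, z₂)⟩
end
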